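/- Let f(x; W₀,…,W_L) = W_L ⋯ W₀ x be a deep linear network with W_k ∈ ℝ^{n_{k+1}×n_k}, and let L(W₀,…,W_L) = Σᵢ ℓ(yᵢ, W_L⋯W₀ xᵢ) for a loss ℓ(y, z) that is convex and differentiable in z. If the architecture has no bottleneck, i.e. min_{0 ≤ k ≤ L+1} n_k = min{n₀, n_{L+1}}, then every local minimum of L is a global minimum of L. -/

import Mathlib

/-!
Write `g A = Σᵢ ℓ(yᵢ, A xᵢ)`, so that the loss is `g (W_L ⋯ W₀)`. Since `g` is convex, it suffices
to show that at a local minimum the derivative `G` of `g` at `A = W_L ⋯ W₀` vanishes.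

This is proved by induction on the depth, peeling off the layer on the narrow end of the network;
say `n₀ ≤ n_k` for all `k`, and write `A = T C` with `T = W_L`. Optimality in `T` gives
`G (Δ C) = 0` for every `Δ`. As `C` has at least as many rows as columns, either it has a left
inverse, and then `G = 0` at once, or some `w ≠ 0` satisfies `wᵀ C = 0`. In the latter case all
top layers `T' = T + t u wᵀ` give the same product `A`, so for small `t` the lower layers are
still at a local minimum of `M ↦ g (T' M)`, and the induction hypothesis gives `G (T' D) = 0`
for every `D`. Subtracting the case `t = 0` and taking `D = w vᵀ` yields `G (u vᵀ) = 0` for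
all `u, v`, hence `G = 0`. The case `n_{L+1} ≤ n_k` is the transpose of this argument, peeling
off `W₀`.
-/

/-- The partial matrix products `W_k ⋯ W₀` of a deep linear network. -/
noncomputable def matProd (d : ℕ → ℕ)
    (W : (k : ℕ) → Fin (d (k + 1)) → Fin (d k) → ℝ) :
    (k : ℕ) → Matrix (Fin (d (k + 1))) (Fin (d 0)) ℝ
  | 0 => Matrix.of (W 0)
  | (k + 1) => Matrix.of (W (k + 1)) * matProd d W k

/-- The loss `L(W₀,…,W_L) = Σᵢ ℓ(yᵢ, W_L ⋯ W₀ xᵢ)` of a deep linear network. -/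
noncomputable def linNetLoss {α : Type*} (d : ℕ → ℕ) (L : ℕ) {N : ℕ}
    (x : Fin N → Fin (d 0) → ℝ) (y : Fin N → α)
    (ℓ : α → (Fin (d (L + 1)) → ℝ) → ℝ)
    (W : (k : ℕ) → Fin (d (k + 1)) → Fin (d k) → ℝ) : ℝ :=
  ∑ i, ℓ (y i) ((matProd d W L).mulVec (x i))

open Matrix Filter Topology Function Set

attribute [local instance] Matrix.normedAddCommGroup Matrix.normedSpace

namespace Matrix

variable {m n p : Type*} [Fintype m] [Fintype n] [Fintype p] [DecidableEq m] [DecidableEq n]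

theorem linearMap_eq_zero_of_forall_vecMulVec {R M : Type*} [CommSemiring R] [AddCommMonoid M]
    [Module R M] (G : Matrix m n R →ₗ[R] M) (h : ∀ u v, G (vecMulVec u v) = 0) : G = 0 := by
  refine LinearMap.ext fun A => ?_
  rw [LinearMap.zero_apply]
  induction A using Matrix.induction_on' with
  | h_zero => exact map_zero G
  | h_add A B hA hB => rw [map_add, hA, hB, add_zero]
  | h_std_basis i j x =>
    rw [← mul_one x, ← smul_eq_mul, ← smul_single, map_smul,
      single_eq_single_vecMulVec_single, h, smul_zero]

theorem exists_vecMul_eq_zero_or_exists_mul_eq_one {K : Type*} [Field K] (C : Matrix p n K)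
    (h : Fintype.card n ≤ Fintype.card p) :
    (∃ w ≠ 0, w ᵥ* C = 0) ∨ ∃ B : Matrix n p K, B * C = 1 := by
  by_cases hinj : Injective C.vecMulLinear
  · right
    rw [← vecMul_surjective_iff_exists_left_inverse]
    have hcard : Module.finrank K (p → K) = Module.finrank K (n → K) := by
      have := LinearMap.finrank_le_finrank_of_injective hinj
      simp only [Module.finrank_fintype_fun_eq_card] at this ⊢
      omega
    exact (LinearMap.injective_iff_surjective_of_finrank_eq_finrank hcard).1 hinj
  · left
    by_contra! hC
    exact hinj ((injective_iff_map_eq_zero C.vecMulLinear).2 fun w hw =>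
      by_contra fun hne => hC w hne hw)

theorem linearMap_eq_zero_of_vanishes_mul_right (G : Matrix m n ℝ →ₗ[ℝ] ℝ)
    (hnp : Fintype.card n ≤ Fintype.card p) {T : Matrix m p ℝ} {C : Matrix p n ℝ}
    (hC : ∀ Δ : Matrix m p ℝ, G (Δ * C) = 0)
    (hT : ∀ᶠ T' in 𝓝 T, T' * C = T * C → ∀ D : Matrix p n ℝ, G (T' * D) = 0) : G = 0 := by
  rcases C.exists_vecMul_eq_zero_or_exists_mul_eq_one hnp with ⟨w, hw, hwC⟩ | ⟨B, hBC⟩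
  · refine linearMap_eq_zero_of_forall_vecMulVec G fun u v => ?_
    have hline : Tendsto (fun t : ℝ => T + t • vecMulVec u w) (𝓝[≠] 0) (𝓝 T) :=
      ((continuous_const.add (continuous_id.smul continuous_const)).tendsto' 0 T
        (by simp)).mono_left nhdsWithin_le_nhds
    obtain ⟨t, hTt, ht⟩ := ((hline.eventually hT).and self_mem_nhdsWithin).exists
    have hfib : (T + t • vecMulVec u w) * C = T * C := by
      rw [Matrix.add_mul, Matrix.smul_mul, vecMulVec_mul, hwC]
      ext i j
      simp [vecMulVec_apply]
    have key := hTt hfib (vecMulVec w v)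
    rw [Matrix.add_mul, map_add, hT.self_of_nhds rfl, zero_add, Matrix.smul_mul,
      vecMulVec_mul_vecMulVec, vecMulVec_smul, map_smul, map_smul, smul_eq_mul, smul_eq_mul] at key
    have hww : w ⬝ᵥ w ≠ 0 := dotProduct_self_eq_zero.not.2 hw
    exact (mul_eq_zero.1 ((mul_eq_zero.1 key).resolve_left ht)).resolve_left hww
  · exact LinearMap.ext fun A => by simpa [Matrix.mul_assoc, hBC] using hC (A * B)

theorem linearMap_eq_zero_of_vanishes_mul_left (G : Matrix m n ℝ →ₗ[ℝ] ℝ)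
    (hmp : Fintype.card m ≤ Fintype.card p) {S : Matrix m p ℝ} {T : Matrix p n ℝ}
    (hS : ∀ Δ : Matrix p n ℝ, G (S * Δ) = 0)
    (hT : ∀ᶠ T' in 𝓝 T, S * T' = S * T → ∀ D : Matrix m p ℝ, G (D * T') = 0) : G = 0 := by
  have hTt : ∀ᶠ T' in 𝓝 Tᵀ,
      T'ᵀ ∈ {T' | S * T' = S * T → ∀ D : Matrix m p ℝ, G (D * T') = 0} :=
    (continuous_id.matrix_transpose.tendsto' Tᵀ T (transpose_transpose T)).eventually hT
  have hGt := linearMap_eq_zero_of_vanishes_mul_right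
    (G ∘ₗ (transposeLinearEquiv n m ℝ ℝ).toLinearMap) hmp (T := Tᵀ) (C := Sᵀ)
    (fun Δ => by simpa [transpose_mul] using hS Δᵀ)
    (hTt.mono fun T' hT' hfib D => by
      simpa [transpose_mul] using
        hT' (by simpa [transpose_mul] using congrArg transpose hfib) Dᵀ)
  exact LinearMap.ext fun A => by simpa using LinearMap.congr_fun hGt Aᵀ

end Matrix

namespace Matrix

variable {l m n : Type*} [Fintype m]

noncomputable def mulLeftCLM [Fintype n] (X : Matrix l m ℝ) : Matrix m n ℝ →L[ℝ] Matrix l n ℝ :=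
  (mulLeftLinearMap n ℝ X).toContinuousLinearMap

noncomputable def mulRightCLM [Fintype l] (Y : Matrix m n ℝ) : Matrix l m ℝ →L[ℝ] Matrix l n ℝ :=
  (mulRightLinearMap l ℝ Y).toContinuousLinearMap

end Matrix

section Calculus

variable {E F : Type*} [NormedAddCommGroup E] [NormedSpace ℝ E] [NormedAddCommGroup F]
  [NormedSpace ℝ F]

theorem IsLocalMin.hasFDerivAt_comp_eq_zero {g : F → ℝ} {G : F →L[ℝ] ℝ} (φ : E →L[ℝ] F) {a : E}
    (hmin : IsLocalMin (fun e => g (φ e)) a) (hg : HasFDerivAt g G (φ a)) : G ∘L φ = 0 :=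
  hmin.hasFDerivAt_eq_zero (hg.comp a φ.hasFDerivAt)

theorem ConvexOn.isMinOn_of_hasFDerivAt_eq_zero {s : Set E} {g : E → ℝ} {a : E}
    (hconv : ConvexOn ℝ s g) (ha : a ∈ s) (hg : HasFDerivAt g (0 : E →L[ℝ] ℝ) a) :
    IsMinOn g s a := by
  intro b hb
  have hline : ConvexOn ℝ (Icc 0 1) (g ∘ AffineMap.lineMap (k := ℝ) a b) :=
    (hconv.comp_affineMap (AffineMap.lineMap a b)).subset
      (fun t ht => hconv.1.lineMap_mem ha hb ht) (convex_Icc 0 1)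
  have hderiv : HasDerivAt (g ∘ AffineMap.lineMap (k := ℝ) a b) 0 0 := by
    simpa using ((AffineMap.lineMap_apply_zero (k := ℝ) a b).symm ▸ hg).comp_hasDerivAt (0 : ℝ)
      (AffineMap.hasDerivAt_lineMap (a := a) (b := b) (x := 0))
  simpa [slope] using hline.le_slope_of_hasDerivAt (left_mem_Icc.2 zero_le_one)
    (right_mem_Icc.2 zero_le_one) zero_lt_one hderiv

theorem convexOn_sum {ι : Type*} {s : Set E} (hs : Convex ℝ s) (t : Finset ι) {f : ι → E → ℝ}
    (hf : ∀ i ∈ t, ConvexOn ℝ s (f i)) : ConvexOn ℝ s fun x => ∑ i ∈ t, f i x := by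
  induction t using Finset.cons_induction with
  | empty => simpa using convexOn_const (0 : ℝ) hs
  | cons i t hi ih =>
    simp only [Finset.sum_cons]
    exact (hf i (Finset.mem_cons_self i t)).add (ih fun j hj => hf j (Finset.mem_cons_of_mem hj))

end Calculus

abbrev Weights (d : ℕ → ℕ) : Type := (k : ℕ) → Fin (d (k + 1)) → Fin (d k) → ℝ

section Network

variable {d : ℕ → ℕ} {L : ℕ} {W : Weights d}

theorem matProd_update_of_lt (W : Weights d) {k m : ℕ} (h : m < k)
    (Y : Fin (d (k + 1)) → Fin (d k) → ℝ) : matProd d (update W k Y) m = matProd d W m := by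
  induction m with
  | zero => simp [matProd, update_of_ne h.ne]
  | succ m ih => simp only [matProd, update_of_ne h.ne, ih (by omega)]

theorem matProd_update_succ (W : Weights d) (k : ℕ)
    (Y : Fin (d (k + 1 + 1)) → Fin (d (k + 1)) → ℝ) :
    matProd d (update W (k + 1) Y) (k + 1) = of Y * matProd d W k := by
  rw [matProd, update_self, matProd_update_of_lt W k.lt_succ_self]

def consLayer (d : ℕ → ℕ) (W₀ : Fin (d 1) → Fin (d 0) → ℝ) (V : Weights fun k => d (k + 1)) :
    Weights d
  | 0 => W₀
  | k + 1 => V k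

theorem matProd_consLayer (W₀ : Fin (d 1) → Fin (d 0) → ℝ) (V : Weights fun k => d (k + 1))
    (m : ℕ) :
    matProd d (consLayer d W₀ V) (m + 1) = matProd (fun k => d (k + 1)) V m * of W₀ := by
  induction m with
  | zero => rfl
  | succ m ih => rw [matProd, ih, ← Matrix.mul_assoc]; rfl

theorem consLayer_zero_succ (W : Weights d) : consLayer d (W 0) (fun k => W (k + 1)) = W := by
  funext k
  cases k <;> rfl

theorem continuous_consLayer :
    Continuous fun q : (Fin (d 1) → Fin (d 0) → ℝ) × Weights (fun k => d (k + 1)) =>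
      consLayer d q.1 q.2 :=
  continuous_pi fun k => by
    cases k with
    | zero => exact continuous_fst
    | succ k => exact (continuous_apply k).comp continuous_snd

theorem isLocalMin_of_forall_abs_sub_lt {f : Weights d → ℝ}
    (h : ∃ ε > (0 : ℝ), ∀ W' : Weights d,
      (∀ k, k ≤ L → ∀ i j, |W' k i j - W k i j| < ε) → f W ≤ f W') : IsLocalMin f W := by
  obtain ⟨ε, hε, h⟩ := h
  have hnear : ∀ᶠ W' in 𝓝 W, ∀ k, k ≤ L → ∀ i j, |W' k i j - W k i j| < ε := by
    refine (eventually_all_finite (Set.finite_le_nat L)).2 fun k _ =>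
      eventually_all.2 fun i => eventually_all.2 fun j => ?_
    have hcont : Continuous fun W' : Weights d => W' k i j := by fun_prop
    exact (hcont.tendsto W).eventually (Metric.ball_mem_nhds _ hε)
  exact hnear.mono h

theorem IsLocalMin.eventually_le_of_replace_top
    {g : Matrix (Fin (d (L + 2))) (Fin (d 0)) ℝ → ℝ}
    (hW : IsLocalMin (fun W => g (matProd d W (L + 1))) W) :
    ∀ᶠ T in 𝓝 (of (W (L + 1))), ∀ᶠ X in 𝓝 W,
      g (matProd d W (L + 1)) ≤ g (T * matProd d X L) := by
  have hφ : Tendsto (fun q : Matrix (Fin (d (L + 2))) (Fin (d (L + 1))) ℝ × Weights d =>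
      update q.2 (L + 1) (of.symm q.1)) (𝓝 (of (W (L + 1)), W)) (𝓝 W) :=
    (continuous_snd.update (L + 1) continuous_fst).tendsto' _ _ (update_eq_self _ _)
  exact (hφ.eventually hW).curry_nhds.mono fun T hT => hT.mono fun X hX => by
    simpa only [matProd_update_succ, Equiv.apply_symm_apply] using hX

theorem IsLocalMin.eventually_le_of_replace_bottom
    {g : Matrix (Fin (d (L + 2))) (Fin (d 0)) ℝ → ℝ}
    (hW : IsLocalMin (fun W => g (matProd d W (L + 1))) W) :
    ∀ᶠ T in 𝓝 (of (W 0)), ∀ᶠ V in 𝓝 (fun k => W (k + 1)),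
      g (matProd d W (L + 1)) ≤ g (matProd (fun k => d (k + 1)) V L * T) := by
  have hφ : Tendsto (fun q : Matrix (Fin (d 1)) (Fin (d 0)) ℝ × Weights (fun k => d (k + 1)) =>
      consLayer d (of.symm q.1) q.2) (𝓝 (of (W 0), fun k => W (k + 1))) (𝓝 W) :=
    continuous_consLayer.tendsto' _ _ (consLayer_zero_succ W)
  exact (hφ.eventually hW).curry_nhds.mono fun T hT => hT.mono fun V hV => by
    simpa only [matProd_consLayer, Equiv.apply_symm_apply] using hV

theorem hasFDerivAt_eq_zero_of_isLocalMin_matProd_zero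
    {g : Matrix (Fin (d 1)) (Fin (d 0)) ℝ → ℝ} {G : Matrix (Fin (d 1)) (Fin (d 0)) ℝ →L[ℝ] ℝ}
    (hg : HasFDerivAt g G (matProd d W 0)) (hW : IsLocalMin (fun W => g (matProd d W 0)) W) :
    G = 0 := by
  have hφ : Tendsto (fun T : Matrix (Fin (d 1)) (Fin (d 0)) ℝ => update W 0 (of.symm T))
      (𝓝 (of (W 0))) (𝓝 W) :=
    (continuous_const.update 0 continuous_id).tendsto' _ _ (update_eq_self _ _)
  have hmin : IsLocalMin g (matProd d W 0) :=
    (hφ.eventually hW).mono fun T hT => by simpa [matProd] using hT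
  exact hmin.hasFDerivAt_eq_zero hg

theorem hasFDerivAt_eq_zero_of_isLocalMin_matProd_of_input_le
    (hd : ∀ k, 1 ≤ k → k ≤ L → d 0 ≤ d k) {g : Matrix (Fin (d (L + 1))) (Fin (d 0)) ℝ → ℝ}
    {G : Matrix (Fin (d (L + 1))) (Fin (d 0)) ℝ →L[ℝ] ℝ}
    (hg : HasFDerivAt g G (matProd d W L)) (hW : IsLocalMin (fun W => g (matProd d W L)) W) :
    G = 0 := by
  induction L with
  | zero => exact hasFDerivAt_eq_zero_of_isLocalMin_matProd_zero hg hW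
  | succ L ih =>
    set C := matProd d W L
    set T : Matrix (Fin (d (L + 2))) (Fin (d (L + 1))) ℝ := of (W (L + 1))
    have hTC : matProd d W (L + 1) = T * C := rfl
    have hnear := hW.eventually_le_of_replace_top
    rw [hTC] at hg hnear
    have hC : ∀ Δ : Matrix (Fin (d (L + 2))) (Fin (d (L + 1))) ℝ, G (Δ * C) = 0 :=
      fun Δ => DFunLike.congr_fun (IsLocalMin.hasFDerivAt_comp_eq_zero (g := g) (mulRightCLM C)
        (hnear.mono fun _ h => h.self_of_nhds) hg) Δ
    have hT : ∀ᶠ T' in 𝓝 T, T' * C = T * C →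
        ∀ D : Matrix (Fin (d (L + 1))) (Fin (d 0)) ℝ, G (T' * D) = 0 :=
      hnear.mono fun T' hT' hfib => by
        have hmin : IsLocalMin (fun X => g (T' * matProd d X L)) W :=
          hT'.mono fun X hX => by rwa [← hfib] at hX
        have hg' : HasFDerivAt (fun M => g (T' * M)) (G ∘L mulLeftCLM T') C :=
          (hfib ▸ hg).comp C (mulLeftCLM T').hasFDerivAt
        exact DFunLike.congr_fun (ih (fun k h1 h2 => hd k h1 (by omega)) hg' hmin)
    exact ContinuousLinearMap.coe_injective <| linearMap_eq_zero_of_vanishes_mul_right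
      (G : Matrix (Fin (d (L + 2))) (Fin (d 0)) ℝ →ₗ[ℝ] ℝ)
      (by simpa using hd (L + 1) (by omega) le_rfl) hC hT

theorem hasFDerivAt_eq_zero_of_isLocalMin_matProd_of_output_le
    (hd : ∀ k, 1 ≤ k → k ≤ L → d (L + 1) ≤ d k) {g : Matrix (Fin (d (L + 1))) (Fin (d 0)) ℝ → ℝ}
    {G : Matrix (Fin (d (L + 1))) (Fin (d 0)) ℝ →L[ℝ] ℝ}
    (hg : HasFDerivAt g G (matProd d W L)) (hW : IsLocalMin (fun W => g (matProd d W L)) W) :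
    G = 0 := by
  induction L generalizing d with
  | zero => exact hasFDerivAt_eq_zero_of_isLocalMin_matProd_zero hg hW
  | succ L ih =>
    set S := matProd (fun k => d (k + 1)) (fun k => W (k + 1)) L
    set T : Matrix (Fin (d 1)) (Fin (d 0)) ℝ := of (W 0)
    have hST : matProd d W (L + 1) = S * T := by
      rw [← matProd_consLayer, consLayer_zero_succ]
    have hnear := hW.eventually_le_of_replace_bottom
    rw [hST] at hg hnear
    have hS : ∀ Δ : Matrix (Fin (d 1)) (Fin (d 0)) ℝ, G (S * Δ) = 0 :=
      fun Δ => DFunLike.congr_fun (IsLocalMin.hasFDerivAt_comp_eq_zero (g := g) (mulLeftCLM S)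
        (hnear.mono fun _ h => h.self_of_nhds) hg) Δ
    have hT : ∀ᶠ T' in 𝓝 T, S * T' = S * T →
        ∀ D : Matrix (Fin (d (L + 2))) (Fin (d 1)) ℝ, G (D * T') = 0 :=
      hnear.mono fun T' hT' hfib => by
        have hmin : IsLocalMin (fun V => g (matProd (fun k => d (k + 1)) V L * T'))
            (fun k => W (k + 1)) :=
          hT'.mono fun V hV => by rwa [← hfib] at hV
        have hg' : HasFDerivAt (fun M => g (M * T')) (G ∘L mulRightCLM T') S :=
          (hfib ▸ hg).comp S (mulRightCLM T').hasFDerivAt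
        exact DFunLike.congr_fun (ih (d := fun k => d (k + 1)) (W := fun k => W (k + 1))
          (fun k h1 h2 => hd (k + 1) (by omega) (by omega)) hg' hmin)
    exact ContinuousLinearMap.coe_injective <| linearMap_eq_zero_of_vanishes_mul_left
      (G : Matrix (Fin (d (L + 2))) (Fin (d 0)) ℝ →ₗ[ℝ] ℝ)
      (by simpa using hd 1 le_rfl (by omega)) hS hT

theorem hasFDerivAt_eq_zero_of_isLocalMin_matProd
    (hbot : ∀ k, k ≤ L + 1 → min (d 0) (d (L + 1)) ≤ d k)
    {g : Matrix (Fin (d (L + 1))) (Fin (d 0)) ℝ → ℝ}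
    {G : Matrix (Fin (d (L + 1))) (Fin (d 0)) ℝ →L[ℝ] ℝ}
    (hg : HasFDerivAt g G (matProd d W L)) (hW : IsLocalMin (fun W => g (matProd d W L)) W) :
    G = 0 := by
  rcases le_total (d 0) (d (L + 1)) with h | h
  · exact hasFDerivAt_eq_zero_of_isLocalMin_matProd_of_input_le
      (fun k _ hk => by simpa [h] using hbot k (by omega)) hg hW
  · exact hasFDerivAt_eq_zero_of_isLocalMin_matProd_of_output_le
      (fun k _ hk => by simpa [h] using hbot k (by omega)) hg hW

end Network

/-- Theorem (Laurent–von Brecht): for a deep linear network with a loss `ℓ(y, z)` that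
is convex and differentiable in `z`, if the architecture has no bottleneck
(`min_k n_k = min{n₀, n_{L+1}}`), every local minimum of the training loss is global. -/
theorem linear_net_local_minima_are_global {α : Type*}
    (d : ℕ → ℕ) (L : ℕ)
    (hbot : ∀ k, k ≤ L + 1 → min (d 0) (d (L + 1)) ≤ d k)
    (N : ℕ) (x : Fin N → Fin (d 0) → ℝ) (y : Fin N → α)
    (ℓ : α → (Fin (d (L + 1)) → ℝ) → ℝ)
    (hconv : ∀ a, ConvexOn ℝ Set.univ (ℓ a))
    (hdiff : ∀ a, Differentiable ℝ (ℓ a))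
    (W : (k : ℕ) → Fin (d (k + 1)) → Fin (d k) → ℝ)
    (hlocmin : ∃ ε > (0 : ℝ), ∀ W' : (k : ℕ) → Fin (d (k + 1)) → Fin (d k) → ℝ,
      (∀ k, k ≤ L → ∀ i j, |W' k i j - W k i j| < ε) →
      linNetLoss d L x y ℓ W ≤ linNetLoss d L x y ℓ W') :
    ∀ W' : (k : ℕ) → Fin (d (k + 1)) → Fin (d k) → ℝ,
      linNetLoss d L x y ℓ W ≤ linNetLoss d L x y ℓ W' := by
  intro W'
  set g : Matrix (Fin (d (L + 1))) (Fin (d 0)) ℝ → ℝ := fun A => ∑ i, ℓ (y i) (A *ᵥ x i)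
  have hg_conv : ConvexOn ℝ univ g := convexOn_sum convex_univ _ fun i _ =>
    (hconv (y i)).comp_linearMap ((mulVecBilin ℝ ℝ).flip (x i))
  have hg_diff : Differentiable ℝ g := Differentiable.fun_sum fun i _ =>
    (hdiff (y i)).comp ((mulVecBilin ℝ ℝ).flip (x i)).toContinuousLinearMap.differentiable
  have hcrit : fderiv ℝ g (matProd d W L) = 0 :=
    hasFDerivAt_eq_zero_of_isLocalMin_matProd hbot (hg_diff _).hasFDerivAt
      (isLocalMin_of_forall_abs_sub_lt hlocmin)
  exact hg_conv.isMinOn_of_hasFDerivAt_eq_zero (mem_univ _) (hcrit ▸ (hg_diff _).hasFDerivAt)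
    (mem_univ _)
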